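/- arXiv:1605.02293 — 4 statements merged into one kernel-verified Lean document; each statement's English description precedes it below -/
import Mathlib

section
/- Let g be a smooth complex-valued function on the unit disk, λ_1, …, λ_p complex constants with B(z) = Σ_{k=1}^p λ_k|z|^{2(k−1)} ≠ 0 for z ≠ 0, and set F(z) = B(z)·g(z). Then for all z in the punctured unit disk with g(z) ≠ 0 and F(z) ≠ 0, Re(L[F](z)/F(z)) = Re(L[g](z)/g(z)). Consequently, the curve t ↦ F(re^{it}) is starlike with respect to 0 for each 0 < r < 1 if and only if the same holds for g, assuming both F and g are univalent. -/
open Complex Finset Metric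

/-- Wirtinger derivative ∂/∂z. -/
noncomputable def wz (f : ℂ → ℂ) (z : ℂ) : ℂ :=
  (fderiv ℝ f z 1 - Complex.I * fderiv ℝ f z Complex.I) / 2

/-- Wirtinger derivative ∂/∂z̄. -/
noncomputable def wzb (f : ℂ → ℂ) (z : ℂ) : ℂ :=
  (fderiv ℝ f z 1 + Complex.I * fderiv ℝ f z Complex.I) / 2

/-- The operator L[f] = z f_z − z̄ f_{z̄}. -/
noncomputable def Lop (f : ℂ → ℂ) : ℂ → ℂ :=
  fun z => z * wz f z - (starRingEnd ℂ) z * wzb f z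

/-- The operator 𝔏[f] = z f_z + z̄ f_{z̄}. -/
noncomputable def Lfrak (f : ℂ → ℂ) : ℂ → ℂ :=
  fun z => z * wz f z + (starRingEnd ℂ) z * wzb f z

/-- The Jacobian J_f = |f_z|² − |f_{z̄}|². -/
noncomputable def Jac (f : ℂ → ℂ) (z : ℂ) : ℝ :=
  ‖wz f z‖ ^ 2 - ‖wzb f z‖ ^ 2

lemma lop_mul (a b : ℂ → ℂ) (z : ℂ) (ha : DifferentiableAt ℝ a z)
    (hb : DifferentiableAt ℝ b z) :
    Lop (fun w => a w * b w) z = a z * Lop b z + b z * Lop a z := by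
  have h := (ha.hasFDerivAt.fun_mul hb.hasFDerivAt).fderiv
  simp only [Lop, wz, wzb, h, ContinuousLinearMap.add_apply, ContinuousLinearMap.smul_apply,
    smul_eq_mul]
  ring

lemma diff_conj (z : ℂ) : DifferentiableAt ℝ (fun w : ℂ => (starRingEnd ℂ) w) z := by
  have : (fun w : ℂ => (starRingEnd ℂ) w) = ⇑Complex.conjCLE := by
    funext w; simp
  rw [this]; exact Complex.conjCLE.differentiableAt

lemma lop_conj (z : ℂ) : Lop (fun w : ℂ => (starRingEnd ℂ) w) z = -(starRingEnd ℂ) z := by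
  have : (fun w : ℂ => (starRingEnd ℂ) w) = ⇑Complex.conjCLE := by
    funext w; simp
  simp only [Lop, wz, wzb, this, Complex.conjCLE.fderiv]
  simp [Complex.ext_iff]

lemma lop_id (z : ℂ) : Lop (fun w : ℂ => w) z = z := by
  simp only [Lop, wz, wzb, fderiv_id']
  simp [Complex.ext_iff]

lemma diff_h (z : ℂ) : DifferentiableAt ℝ (fun w : ℂ => w * (starRingEnd ℂ) w) z :=
  differentiableAt_fun_id.mul (diff_conj z)

lemma lop_h (z : ℂ) : Lop (fun w : ℂ => w * (starRingEnd ℂ) w) z = 0 := by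
  rw [lop_mul _ _ z differentiableAt_fun_id (diff_conj z), lop_conj, lop_id]
  ring

lemma diff_hpow (z : ℂ) (k : ℕ) :
    DifferentiableAt ℝ (fun w : ℂ => (w * (starRingEnd ℂ) w) ^ k) z :=
  (diff_h z).pow k

lemma lop_const (c z : ℂ) : Lop (fun _ : ℂ => c) z = 0 := by
  simp [Lop, wz, wzb]

lemma lop_hpow (z : ℂ) (k : ℕ) : Lop (fun w : ℂ => (w * (starRingEnd ℂ) w) ^ k) z = 0 := by
  induction k with
  | zero => simpa using lop_const 1 z
  | succ n ih =>
      have : (fun w : ℂ => (w * (starRingEnd ℂ) w) ^ (n + 1)) =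
          fun w => (w * (starRingEnd ℂ) w) ^ n * (w * (starRingEnd ℂ) w) := by
        funext w; ring
      rw [this, lop_mul _ _ z (diff_hpow z n) (diff_h z), ih, lop_h]
      ring

lemma lop_add (a b : ℂ → ℂ) (z : ℂ) (ha : DifferentiableAt ℝ a z)
    (hb : DifferentiableAt ℝ b z) :
    Lop (fun w => a w + b w) z = Lop a z + Lop b z := by
  simp only [Lop, wz, wzb, fderiv_fun_add ha hb, ContinuousLinearMap.add_apply]
  ring

lemma lop_const_mul (c : ℂ) (f : ℂ → ℂ) (z : ℂ) (hf : DifferentiableAt ℝ f z) :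
    Lop (fun w => c * f w) z = c * Lop f z := by
  simp only [Lop, wz, wzb, fderiv_const_mul hf c, ContinuousLinearMap.smul_apply, smul_eq_mul]
  ring

lemma lop_sum {ι : Type*} (s : Finset ι) (f : ι → ℂ → ℂ) (z : ℂ)
    (hf : ∀ i ∈ s, DifferentiableAt ℝ (f i) z) :
    Lop (fun w => ∑ i ∈ s, f i w) z = ∑ i ∈ s, Lop (f i) z := by
  induction s using Finset.cons_induction with
  | empty => simpa using lop_const 0 z
  | cons i s hi ih =>
      simp only [Finset.sum_cons]
      rw [lop_add _ _ z (hf i (Finset.mem_cons_self i s))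
        (DifferentiableAt.fun_sum fun j hj => hf j (Finset.mem_cons_of_mem hj)),
        ih fun j hj => hf j (Finset.mem_cons_of_mem hj)]

lemma lop_B (p : ℕ) (lam : ℕ → ℂ) (z : ℂ) :
    Lop (fun w : ℂ => ∑ k ∈ Finset.range p, lam k * (w * (starRingEnd ℂ) w) ^ k) z = 0 := by
  rw [lop_sum _ _ z (fun k _ => (differentiableAt_const _).fun_mul (diff_hpow z k))]
  refine Finset.sum_eq_zero fun k _ => ?_
  rw [lop_const_mul _ _ z (diff_hpow z k), lop_hpow]
  ring

lemma abs_pow_eq (w : ℂ) (k : ℕ) :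
    ((‖w‖ : ℂ)) ^ (2 * k) = (w * (starRingEnd ℂ) w) ^ k := by
  rw [pow_mul]
  congr 1
  rw [Complex.mul_conj]
  norm_cast
  exact Complex.sq_norm w

/-- For F = B·g with B(z) = Σ_{k=1}^p λ_k|z|^{2(k-1)} ≠ 0 for z ≠ 0 (indexed by
k ∈ {0, …, p-1}): Re(L[F]/F) = Re(L[g]/g) on the punctured disk, and consequently
(for F, g univalent) F is starlike iff g is starlike. -/
theorem stmt5 (p : ℕ) (lam : ℕ → ℂ) (g F : ℂ → ℂ)
    (hg : ContDiffOn ℝ (⊤ : ℕ∞) g (Metric.ball (0 : ℂ) 1))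
    (hF : ∀ w, F w = (∑ k ∈ Finset.range p, lam k * ((‖w‖ : ℂ)) ^ (2 * k)) * g w)
    (hB : ∀ z ∈ Metric.ball (0 : ℂ) 1 \ {0},
      (∑ k ∈ Finset.range p, lam k * ((‖z‖ : ℂ)) ^ (2 * k)) ≠ 0)
    (hFinj : Set.InjOn F (Metric.ball (0 : ℂ) 1))
    (hginj : Set.InjOn g (Metric.ball (0 : ℂ) 1)) :
    (∀ z ∈ Metric.ball (0 : ℂ) 1 \ {0}, g z ≠ 0 → F z ≠ 0 →
        (Lop F z / F z).re = (Lop g z / g z).re) ∧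
    ((∀ z ∈ Metric.ball (0 : ℂ) 1 \ {0}, g z ≠ 0) →
      ((∀ z ∈ Metric.ball (0 : ℂ) 1 \ {0}, 0 < (Lop F z / F z).re) ↔
        (∀ z ∈ Metric.ball (0 : ℂ) 1 \ {0}, 0 < (Lop g z / g z).re))) := by
  set B : ℂ → ℂ := fun w => ∑ k ∈ Finset.range p, lam k * (w * (starRingEnd ℂ) w) ^ k with hBdef
  have hBeq : ∀ w, (∑ k ∈ Finset.range p, lam k * ((‖w‖ : ℂ)) ^ (2 * k)) = B w := by
    intro w
    exact Finset.sum_congr rfl fun k _ => by rw [abs_pow_eq]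
  have hFfun : F = fun w => B w * g w := by
    funext w; rw [hF w, hBeq w]
  have key : ∀ z ∈ Metric.ball (0 : ℂ) 1 \ {0}, g z ≠ 0 →
      Lop F z / F z = Lop g z / g z := by
    intro z hz hgz
    have hgd : DifferentiableAt ℝ g z :=
      (hg.contDiffAt (isOpen_ball.mem_nhds hz.1)).differentiableAt (by simp)
    have hBd : DifferentiableAt ℝ B z :=
      DifferentiableAt.fun_sum fun k _ => (differentiableAt_const _).fun_mul (diff_hpow z k)
    have hLF : Lop F z = B z * Lop g z := by
      rw [hFfun, lop_mul B g z hBd hgd, lop_B p lam z]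
      ring
    have hBz : B z ≠ 0 := by rw [← hBeq z]; exact hB z hz
    rw [hLF, hF z, hBeq z, mul_div_mul_left _ _ hBz]
  constructor
  · intro z hz hgz _
    rw [key z hz hgz]
  · intro hgz
    constructor
    · intro h z hz
      rw [← key z hz (hgz z hz)]
      exact h z hz
    · intro h z hz
      rw [key z hz (hgz z hz)]
      exact h z hz
end

section
/- Let u(z) = a(z) + b(z) + B(z)·g(z) where a is analytic, b is anti-analytic (i.e., b(z) = h(z̄) with h analytic), g is smooth, A(z) = Σ_{k=2}^p λ_k(k−1)|z|^{2(k−2)}, and B(z) = Σ_{k=1}^p λ_k|z|^{2(k−1)}. Then the Jacobian J_u = |u_z|² − |u_{z̄}|² satisfies: J_u(z) = |a'(z)|² − |h'(z̄)|² + |B(z)|²·J_g(z) + 2|g(z)|²·Re( conj(A(z))·B(z)·L[g](z)/g(z) ) + 2·Re( conj(A(z))·conj(g(z))·(z a'(z) − z̄ h'(z̄)) ) + 2·Re( conj(B(z))·( a'(z)·conj(g_z(z)) − h'(z̄)·conj(g_{z̄}(z)) ) ), wherever g(z) ≠ 0. -/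
open Complex Finset Metric

lemma conj_hasFDerivAt (z : ℂ) :
    HasFDerivAt (fun w : ℂ => (starRingEnd ℂ) w)
      (Complex.conjCLE.toContinuousLinearMap : ℂ →L[ℝ] ℂ) z := by
  exact Complex.conjCLE.hasFDerivAt

lemma pow_mc_hasFDerivAt (z : ℂ) (k : ℕ) :
    HasFDerivAt (fun w : ℂ => (w * (starRingEnd ℂ) w) ^ (k+1))
      ((((k:ℂ)+1) * (z * (starRingEnd ℂ) z) ^ k) •
        (z • Complex.conjCLE.toContinuousLinearMap
          + (starRingEnd ℂ) z • ContinuousLinearMap.id ℝ ℂ)) z := by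
  have hm : HasFDerivAt (fun w : ℂ => w * (starRingEnd ℂ) w)
      (z • Complex.conjCLE.toContinuousLinearMap
        + (starRingEnd ℂ) z • ContinuousLinearMap.id ℝ ℂ) z :=
    (hasFDerivAt_id z).mul (conj_hasFDerivAt z)
  induction k with
  | zero => simpa using hm
  | succ n ih =>
    have h2 := ih.mul hm
    have hf : (fun w : ℂ => (w * (starRingEnd ℂ) w) ^ (n+1) * (w * (starRingEnd ℂ) w))
        = fun w => (w * (starRingEnd ℂ) w) ^ (n+2) := funext fun w => (pow_succ _ _).symm
    rw [show ((fun w : ℂ => (w * (starRingEnd ℂ) w) ^ (n+1)) * fun w : ℂ => w * (starRingEnd ℂ) w) = fun w => (w * (starRingEnd ℂ) w) ^ (n+2) from hf] at h2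
    refine h2.congr_fderiv ?_
    rw [smul_smul, ← add_smul]
    push_cast
    ring_nf

/-- Jacobian formula for u(z) = a(z) + h(z̄) + B(z)·g(z), with
A(z) = Σ_{k=2}^p λ_k(k-1)|z|^{2(k-2)} and B(z) = Σ_{k=1}^p λ_k|z|^{2(k-1)}
(indexed here by k ∈ {0, …, p-1}, so A(z) = Σ_{k∈range (p-1)} λ_{k+1}(k+1)|z|^{2k}). -/
theorem stmt6 (p : ℕ) (lam : ℕ → ℂ) (a h g u A B : ℂ → ℂ)
    (ha : DifferentiableOn ℂ a (Metric.ball (0 : ℂ) 1))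
    (hh : DifferentiableOn ℂ h (Metric.ball (0 : ℂ) 1))
    (hg : ContDiffOn ℝ (⊤ : ℕ∞) g (Metric.ball (0 : ℂ) 1))
    (hA : ∀ w, A w = ∑ k ∈ Finset.range (p - 1),
      lam (k + 1) * (k + 1 : ℂ) * ((‖w‖ : ℂ)) ^ (2 * k))
    (hB : ∀ w, B w = ∑ k ∈ Finset.range p, lam k * ((‖w‖ : ℂ)) ^ (2 * k))
    (hu : ∀ w, u w = a w + h ((starRingEnd ℂ) w) + B w * g w)
    (z : ℂ) (hz : z ∈ Metric.ball (0 : ℂ) 1) (hg0 : g z ≠ 0) :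
    Jac u z =
      (‖deriv a z‖) ^ 2 - (‖deriv h ((starRingEnd ℂ) z)‖) ^ 2
      + (‖B z‖) ^ 2 * Jac g z
      + 2 * (‖g z‖) ^ 2 *
          ((starRingEnd ℂ) (A z) * B z * (Lop g z / g z)).re
      + 2 * ((starRingEnd ℂ) (A z) * (starRingEnd ℂ) (g z) *
          (z * deriv a z - (starRingEnd ℂ) z * deriv h ((starRingEnd ℂ) z))).re
      + 2 * ((starRingEnd ℂ) (B z) *
          (deriv a z * (starRingEnd ℂ) (wz g z)
            - deriv h ((starRingEnd ℂ) z) * (starRingEnd ℂ) (wzb g z))).re := by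
  -- Notation
  set cz := (starRingEnd ℂ) z with hcz
  have hzc : cz ∈ Metric.ball (0 : ℂ) 1 := by
    simpa [hcz, Metric.mem_ball, Complex.dist_eq] using hz
  have hda : DifferentiableAt ℂ a z := (ha z hz).differentiableAt (isOpen_ball.mem_nhds hz)
  have hdh : DifferentiableAt ℂ h cz := (hh cz hzc).differentiableAt (isOpen_ball.mem_nhds hzc)
  have hdg : DifferentiableAt ℝ g z :=
    (hg.contDiffAt (isOpen_ball.mem_nhds hz)).differentiableAt (by simp)
  set α := deriv a z with hα
  set β := deriv h cz with hβ
  set C : ℂ →L[ℝ] ℂ := Complex.conjCLE.toContinuousLinearMap with hC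
  set M : ℂ →L[ℝ] ℂ := z • C + cz • ContinuousLinearMap.id ℝ ℂ with hM
  set Dg := fderiv ℝ g z with hDg
  -- per-term derivative
  have hterm : ∀ k : ℕ, HasFDerivAt (fun w : ℂ => lam k * (w * (starRingEnd ℂ) w) ^ k)
      ((lam k * k * (z * cz) ^ (k-1)) • M) z := by
    intro k
    match k with
    | 0 =>
      have h0 : HasFDerivAt (fun _ : ℂ => lam 0) (0 : ℂ →L[ℝ] ℂ) z := hasFDerivAt_const _ _
      convert h0 using 2 <;> simp
    | (n+1) =>
      have := (pow_mc_hasFDerivAt z n).const_mul (lam (n+1))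
      rw [smul_smul, ← hcz] at this
      refine this.congr_fderiv ?_
      congr 1
      push_cast
      ring_nf
  set S : ℂ := ∑ k ∈ Finset.range p, lam k * k * (z * cz) ^ (k-1) with hS
  set q : ℂ → ℂ := fun w => ∑ k ∈ Finset.range p, lam k * (w * (starRingEnd ℂ) w) ^ k with hq
  have hqd : HasFDerivAt q (S • M) z := by
    have h1 := HasFDerivAt.fun_sum (fun k (_ : k ∈ Finset.range p) => hterm k)
    rw [← Finset.sum_smul] at h1
    exact h1
  -- B = q
  have habs : ∀ w : ℂ, ∀ k : ℕ, ((‖w‖ : ℂ)) ^ (2*k) = (w * (starRingEnd ℂ) w) ^ k := by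
    intro w k
    rw [pow_mul, ← Complex.ofReal_pow, Complex.sq_norm, Complex.mul_conj]
  have hBq : B = q := by
    funext w
    rw [hB, hq]
    exact Finset.sum_congr rfl fun k _ => by rw [habs]
  -- S = A z
  have hSA : S = A z := by
    rw [hS, hA]
    cases p with
    | zero => simp
    | succ n =>
      rw [Finset.sum_range_succ']
      simp only [Nat.cast_zero, mul_zero, zero_mul, add_zero, Nat.add_sub_cancel]
      exact Finset.sum_congr rfl fun k _ => by
        rw [habs, ← hcz]; push_cast; ring_nf
  -- derivative of u
  set E : ℂ →L[ℝ] ℂ := (α • (1 : ℂ →L[ℝ] ℂ) + (β • (1 : ℂ →L[ℝ] ℂ)).comp C)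
      + (q z • Dg + g z • (S • M)) with hE
  have hu' : u = fun w => a w + h ((starRingEnd ℂ) w) + q w * g w := by
    funext w; rw [hu, hBq]
  have Hu : HasFDerivAt u E z := by
    rw [hu']
    exact ((hda.hasDerivAt.complexToReal_fderiv).add
      ((hdh.hasDerivAt.complexToReal_fderiv).comp z (conj_hasFDerivAt z))).add
      (hqd.mul hdg.hasFDerivAt) |>.congr_of_eventuallyEq (by rfl)
  have hfd : fderiv ℝ u z = E := Hu.fderiv
  -- evaluate
  have hE1 : fderiv ℝ u z 1 = α + β + (q z * Dg 1 + g z * (S * (z + cz))) := by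
    rw [hfd, hE, hM, hC]
    simp [smul_eq_mul]
    ring
  have hEI : fderiv ℝ u z Complex.I =
      α * Complex.I + β * (-Complex.I)
        + (q z * Dg Complex.I + g z * (S * (z * (-Complex.I) + cz * Complex.I))) := by
    rw [hfd, hE, hM, hC]
    simp [smul_eq_mul, Complex.conj_I]
    ring
  have hI2 : Complex.I * Complex.I = -1 := Complex.I_mul_I
  have hwzu : wz u z = α + cz * A z * g z + B z * wz g z := by
    rw [← hSA, hBq]
    simp only [wz, hE1, hEI, ← hDg]
    field_simp
    linear_combination (β - α + g z * S * z - g z * S * cz) * hI2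
  have hwzbu : wzb u z = β + z * A z * g z + B z * wzb g z := by
    rw [← hSA, hBq]
    simp only [wzb, hE1, hEI, ← hDg]
    field_simp
    linear_combination (α - β - g z * S * z + g z * S * cz) * hI2
  -- final algebra
  have hg0c : (starRingEnd ℂ) (g z) ≠ 0 := by simpa using hg0
  set Av := A z with hAv
  set Bv := B z with hBv
  set G := g z with hG
  set P := wz g z with hP
  set Q := wzb g z with hQ
  have hL : Lop g z = z * P - cz * Q := rfl
  have key : (α + cz*Av*G + Bv*P) * (starRingEnd ℂ) (α + cz*Av*G + Bv*P)
      - (β + z*Av*G + Bv*Q) * (starRingEnd ℂ) (β + z*Av*G + Bv*Q)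
    = α * (starRingEnd ℂ) α - β * (starRingEnd ℂ) β
      + (Bv * (starRingEnd ℂ) Bv) * (P * (starRingEnd ℂ) P - Q * (starRingEnd ℂ) Q)
      + (G * (starRingEnd ℂ) G) *
          ((starRingEnd ℂ) Av * Bv * ((z*P - cz*Q)/G)
            + (starRingEnd ℂ) ((starRingEnd ℂ) Av * Bv * ((z*P - cz*Q)/G)))
      + ((starRingEnd ℂ) Av * (starRingEnd ℂ) G * (z*α - cz*β)
            + (starRingEnd ℂ) ((starRingEnd ℂ) Av * (starRingEnd ℂ) G * (z*α - cz*β)))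
      + ((starRingEnd ℂ) Bv * (α * (starRingEnd ℂ) P - β * (starRingEnd ℂ) Q)
            + (starRingEnd ℂ) ((starRingEnd ℂ) Bv * (α * (starRingEnd ℂ) P - β * (starRingEnd ℂ) Q))) := by
    simp only [hcz, map_add, map_mul, map_sub, map_div₀, Complex.conj_conj]
    field_simp
    ring
  have e := congrArg Complex.re key
  simp only [Complex.mul_conj, Complex.add_conj, ← Complex.ofReal_mul, ← Complex.ofReal_sub,
    ← Complex.ofReal_add, Complex.ofReal_re] at e
  simp only [Jac, hwzu, hwzbu, hL, Complex.sq_norm, ← hP, ← hQ]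
  linarith [e]
end

section
/- Let g be a smooth complex-valued function on the unit disk with g(z) ≠ 0 for z ≠ 0, satisfying J_g(z) > 0 and Re(L[g](z)/g(z)) > 0 for all z in the punctured disk. Let p ≥ 2 and u(z) = |z|^{2(p−1)}·g(z). Then J_u(z) > 0 for all z in the punctured unit disk; in particular u is orientation preserving and locally univalent there. -/
open Complex Finset Metric

lemma wz_mul {f g : ℂ → ℂ} {z : ℂ} (hf : DifferentiableAt ℝ f z)
    (hg : DifferentiableAt ℝ g z) :
    wz (fun w => f w * g w) z = wz f z * g z + f z * wz g z := by
  unfold wz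
  rw [fderiv_fun_mul hf hg]
  simp only [ContinuousLinearMap.add_apply, ContinuousLinearMap.smul_apply, smul_eq_mul]
  ring

lemma wzb_mul {f g : ℂ → ℂ} {z : ℂ} (hf : DifferentiableAt ℝ f z)
    (hg : DifferentiableAt ℝ g z) :
    wzb (fun w => f w * g w) z = wzb f z * g z + f z * wzb g z := by
  unfold wzb
  rw [fderiv_fun_mul hf hg]
  simp only [ContinuousLinearMap.add_apply, ContinuousLinearMap.smul_apply, smul_eq_mul]
  ring

lemma fderiv_apply_holo {f : ℂ → ℂ} {z : ℂ} (hf : DifferentiableAt ℂ f z) (v : ℂ) :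
    fderiv ℝ f z v = deriv f z * v := by
  rw [hf.fderiv_restrictScalars ℝ]
  have h1 : fderiv ℂ f z v = v • fderiv ℂ f z 1 := by
    rw [← (fderiv ℂ f z).map_smul, smul_eq_mul, mul_one]
  simp only [ContinuousLinearMap.coe_restrictScalars', h1, smul_eq_mul, fderiv_apply_one_eq_deriv]
  ring

lemma wz_holo {f : ℂ → ℂ} {z : ℂ} (hf : DifferentiableAt ℂ f z) :
    wz f z = deriv f z := by
  unfold wz
  rw [fderiv_apply_holo hf, fderiv_apply_holo hf]
  linear_combination (- deriv f z / 2) * Complex.I_sq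

lemma wzb_holo {f : ℂ → ℂ} {z : ℂ} (hf : DifferentiableAt ℂ f z) :
    wzb f z = 0 := by
  unfold wzb
  rw [fderiv_apply_holo hf, fderiv_apply_holo hf]
  linear_combination (deriv f z / 2) * Complex.I_sq

lemma fderiv_apply_conj {f : ℂ → ℂ} {z : ℂ} (_hf : DifferentiableAt ℝ f z) (v : ℂ) :
    fderiv ℝ (fun w => (starRingEnd ℂ) (f w)) z v = (starRingEnd ℂ) (fderiv ℝ f z v) := by
  have h := Complex.conjCLE.comp_fderiv (f := f) (x := z)
  have h2 : fderiv ℝ (fun w => (starRingEnd ℂ) (f w)) z v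
      = fderiv ℝ (⇑Complex.conjCLE ∘ f) z v := rfl
  rw [h2, h]
  rfl

lemma wz_conj {f : ℂ → ℂ} {z : ℂ} (hf : DifferentiableAt ℝ f z) :
    wz (fun w => (starRingEnd ℂ) (f w)) z = (starRingEnd ℂ) (wzb f z) := by
  unfold wz wzb
  rw [fderiv_apply_conj hf, fderiv_apply_conj hf]
  simp only [map_div₀, map_add, map_mul, Complex.conj_I, map_ofNat]
  ring

lemma wzb_conj {f : ℂ → ℂ} {z : ℂ} (hf : DifferentiableAt ℝ f z) :
    wzb (fun w => (starRingEnd ℂ) (f w)) z = (starRingEnd ℂ) (wz f z) := by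
  unfold wz wzb
  rw [fderiv_apply_conj hf, fderiv_apply_conj hf]
  simp only [map_div₀, map_sub, map_mul, Complex.conj_I, map_ofNat]
  ring

/-- If J_g > 0 and Re(L[g]/g) > 0 on the punctured disk, then
u(z) = |z|^{2(p-1)}·g(z) has positive Jacobian on the punctured disk
(so u is orientation preserving and locally univalent there). -/
theorem stmt8 (p : ℕ) (hp : 2 ≤ p) (g : ℂ → ℂ)
    (hg : ContDiffOn ℝ (⊤ : ℕ∞) g (Metric.ball (0 : ℂ) 1))
    (hg0 : ∀ z ∈ Metric.ball (0 : ℂ) 1 \ {0}, g z ≠ 0)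
    (hJg : ∀ z ∈ Metric.ball (0 : ℂ) 1 \ {0}, 0 < Jac g z)
    (hstar : ∀ z ∈ Metric.ball (0 : ℂ) 1 \ {0}, 0 < (Lop g z / g z).re) :
    ∀ z ∈ Metric.ball (0 : ℂ) 1 \ {0},
      0 < Jac (fun w => ((‖w‖ : ℂ)) ^ (2 * (p - 1)) * g w) z := by
  intro z hz
  obtain ⟨hzb, hz0'⟩ := hz
  have hz0 : z ≠ 0 := by simpa using hz0'
  set m : ℕ := p - 1 with hm
  have hm1 : 1 ≤ m := by omega
  -- rewrite u
  have hufun : (fun w => ((‖w‖ : ℂ)) ^ (2 * (p - 1)) * g w)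
      = fun w => w ^ m * ((starRingEnd ℂ) w) ^ m * g w := by
    funext w
    have e1 : ((‖w‖ : ℂ)) ^ (2 * m) = ((‖w‖ ^ (2 * m) : ℝ) : ℂ) := by
      push_cast; ring
    have e2 : ‖w‖ ^ (2 * m) = Complex.normSq w ^ m := by
      rw [pow_mul, Complex.sq_norm]
    rw [← hm, e1, e2, Complex.ofReal_pow, ← Complex.mul_conj, mul_pow]
  rw [hufun]
  -- differentiability facts
  have hgd : DifferentiableAt ℝ g z :=
    (hg.contDiffAt ((Metric.isOpen_ball).mem_nhds hzb)).differentiableAt (by simp)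
  have hf1c : DifferentiableAt ℂ (fun w : ℂ => w ^ m) z := differentiableAt_pow m
  have hf1 : DifferentiableAt ℝ (fun w : ℂ => w ^ m) z := hf1c.restrictScalars ℝ
  have hconjpow : (fun w : ℂ => ((starRingEnd ℂ) w) ^ m) = fun w => (starRingEnd ℂ) (w ^ m) := by
    funext w; rw [map_pow]
  have hf2 : DifferentiableAt ℝ (fun w : ℂ => ((starRingEnd ℂ) w) ^ m) z := by
    rw [hconjpow]
    exact Complex.conjCLE.differentiableAt.comp z hf1
  have hf12 : DifferentiableAt ℝ (fun w : ℂ => w ^ m * ((starRingEnd ℂ) w) ^ m) z :=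
    hf1.mul hf2
  -- Wirtinger derivatives of pieces
  have hwz1 : wz (fun w : ℂ => w ^ m) z = (m : ℂ) * z ^ (m - 1) := by
    rw [wz_holo hf1c, deriv_pow_field]
  have hwzb1 : wzb (fun w : ℂ => w ^ m) z = 0 := wzb_holo hf1c
  have hwz2 : wz (fun w : ℂ => ((starRingEnd ℂ) w) ^ m) z = 0 := by
    rw [hconjpow, wz_conj hf1, hwzb1, map_zero]
  have hwzb2 : wzb (fun w : ℂ => ((starRingEnd ℂ) w) ^ m) z
      = (m : ℂ) * ((starRingEnd ℂ) z) ^ (m - 1) := by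
    rw [hconjpow, wzb_conj hf1, hwz1, map_mul, map_pow, map_natCast]
  set c : ℂ := (starRingEnd ℂ) z with hc
  set N : ℝ := Complex.normSq z with hN
  have hNpos : 0 < N := Complex.normSq_pos.mpr hz0
  have hzc : z * c = (N : ℂ) := Complex.mul_conj z
  set A : ℂ := wz g z with hA
  set B : ℂ := wzb g z with hB
  set G : ℂ := g z with hG
  have hGne : G ≠ 0 := hg0 z ⟨hzb, hz0'⟩
  have hpow : ∀ x : ℂ, x ^ m = x ^ (m - 1) * x := by
    intro x
    conv_lhs => rw [show m = (m - 1) + 1 by omega]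
    exact pow_succ x (m - 1)
  have h1 : z ^ (m - 1) * c ^ m = (N : ℂ) ^ (m - 1) * c := by
    rw [hpow c, ← hzc, mul_pow]; ring
  have h1' : z ^ m * c ^ (m - 1) = (N : ℂ) ^ (m - 1) * z := by
    rw [hpow z, ← hzc, mul_pow]; ring
  have h2 : z ^ m * c ^ m = (N : ℂ) ^ (m - 1) * (N : ℂ) := by
    rw [hpow z, hpow c, ← hzc, mul_pow]; ring
  -- Wirtinger derivatives of u
  have hwzu : wz (fun w : ℂ => w ^ m * ((starRingEnd ℂ) w) ^ m * g w) z
      = (N : ℂ) ^ (m - 1) * ((m : ℂ) * c * G + (N : ℂ) * A) := by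
    rw [wz_mul hf12 hgd, wz_mul hf1 hf2, hwz1, hwz2, ← hc, ← hG, ← hA]
    calc ((m : ℂ) * z ^ (m - 1) * c ^ m + z ^ m * 0) * G + z ^ m * c ^ m * A
        = (m : ℂ) * (z ^ (m - 1) * c ^ m) * G + (z ^ m * c ^ m) * A := by ring
      _ = (N : ℂ) ^ (m - 1) * ((m : ℂ) * c * G + (N : ℂ) * A) := by rw [h1, h2]; ring
  have hwzbu : wzb (fun w : ℂ => w ^ m * ((starRingEnd ℂ) w) ^ m * g w) z
      = (N : ℂ) ^ (m - 1) * ((m : ℂ) * z * G + (N : ℂ) * B) := by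
    rw [wzb_mul hf12 hgd, wzb_mul hf1 hf2, hwzb1, hwzb2, ← hc, ← hG, ← hB]
    calc (0 * c ^ m + z ^ m * ((m : ℂ) * c ^ (m - 1))) * G + z ^ m * c ^ m * B
        = (m : ℂ) * (z ^ m * c ^ (m - 1)) * G + (z ^ m * c ^ m) * B := by ring
      _ = (N : ℂ) ^ (m - 1) * ((m : ℂ) * z * G + (N : ℂ) * B) := by rw [h1', h2]; ring
  -- Jacobian computation
  set X : ℂ := (m : ℂ) * c * G + (N : ℂ) * A with hX
  set Y : ℂ := (m : ℂ) * z * G + (N : ℂ) * B with hY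
  have hL : Lop g z = z * A - c * B := rfl
  have hLG : (Lop g z * (starRingEnd ℂ) G).re = (Lop g z / G).re * Complex.normSq G := by
    have h2' : Lop g z * (starRingEnd ℂ) G = (Lop g z / G) * (Complex.normSq G : ℂ) := by
      field_simp
      rw [mul_assoc, mul_comm ((starRingEnd ℂ) G) G, Complex.mul_conj]
    rw [h2', mul_comm, Complex.re_ofReal_mul]; ring
  have hnc : Complex.normSq c = N := by rw [hc]; exact Complex.normSq_conj z
  have hkey : Complex.normSq X - Complex.normSq Y
      = N ^ 2 * (Complex.normSq A - Complex.normSq B)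
        + (m : ℝ) * N * (2 * (Lop g z * (starRingEnd ℂ) G).re) := by
    rw [hX, hY, Complex.normSq_add, Complex.normSq_add]
    simp only [Complex.normSq_mul, Complex.normSq_natCast, Complex.normSq_ofReal]
    have hre : ((m : ℂ) * c * G * ((starRingEnd ℂ) ((N : ℂ) * A))).re
        - ((m : ℂ) * z * G * ((starRingEnd ℂ) ((N : ℂ) * B))).re
        = (m : ℝ) * N * (Lop g z * (starRingEnd ℂ) G).re := by
      rw [← Complex.sub_re]
      have heq : (m : ℂ) * c * G * ((starRingEnd ℂ) ((N : ℂ) * A))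
          - (m : ℂ) * z * G * ((starRingEnd ℂ) ((N : ℂ) * B))
          = (((m : ℝ) * N : ℝ) : ℂ) * ((starRingEnd ℂ) (Lop g z * (starRingEnd ℂ) G)) := by
        rw [hL, hc]
        simp only [map_mul, map_sub, Complex.conj_conj, Complex.conj_ofReal,
          Complex.ofReal_mul, Complex.ofReal_natCast]
        ring
      rw [heq, Complex.re_ofReal_mul, Complex.conj_re]
    linear_combination 2 * hre + ((m : ℝ) * (m : ℝ) * Complex.normSq G) * hnc
  have hJac : Jac (fun w : ℂ => w ^ m * ((starRingEnd ℂ) w) ^ m * g w) z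
      = (N * N) ^ (m - 1) * (Complex.normSq X - Complex.normSq Y) := by
    unfold Jac
    rw [hwzu, hwzbu, Complex.sq_norm, Complex.sq_norm, Complex.normSq_mul, Complex.normSq_mul,
      map_pow, Complex.normSq_ofReal]
    ring
  rw [hJac, hkey]
  have hmpos : (0 : ℝ) < (m : ℝ) := by exact_mod_cast Nat.pos_of_ne_zero (by omega)
  have hGpos : 0 < Complex.normSq G := Complex.normSq_pos.mpr hGne
  have hJg' : 0 < Complex.normSq A - Complex.normSq B := by
    have := hJg z ⟨hzb, hz0'⟩
    unfold Jac at this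
    rwa [Complex.sq_norm, Complex.sq_norm, ← hA, ← hB] at this
  have hstar' : 0 < (Lop g z / G).re := hstar z ⟨hzb, hz0'⟩
  have hterm : 0 < (Lop g z * (starRingEnd ℂ) G).re := by
    rw [hLG]; positivity
  positivity
end

section
/- Let F(z) = Σ_{k=1}^p |z|^{2(k−1)} g_k(z), where each g_k is smooth and harmonic on the unit disk (i.e., (g_k)_{zz̄} = 0). Then along z = re^{it}: −∂²F(re^{it})/∂t² = Σ_{k=1}^p |z|^{2(k−1)}·( 𝔏[g_k](z) + z²·(g_k)_{zz}(z) + z̄²·(g_k)_{z̄z̄}(z) ), where 𝔏[g] = z g_z + z̄ g_{z̄}. -/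
open Complex Finset Metric

/-- Any real-Fréchet derivative applied to a vector, in Wirtinger form. -/
lemma fderiv_apply_wz (f : ℂ → ℂ) (z v : ℂ) :
    fderiv ℝ f z v = wz f z * v + wzb f z * (starRingEnd ℂ) v := by
  have hv : v = (v.re : ℂ) + (v.im : ℂ) * Complex.I := (Complex.re_add_im v).symm
  rw [hv]
  have hs : (v.re : ℂ) + (v.im : ℂ) * Complex.I
      = (v.re : ℝ) • (1:ℂ) + (v.im : ℝ) • Complex.I := by
    simp [Complex.real_smul]
  nth_rewrite 1 [hs]
  rw [map_add, (fderiv ℝ f z).map_smul, (fderiv ℝ f z).map_smul]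
  have hc : (starRingEnd ℂ) ((v.re : ℂ) + (v.im : ℂ) * Complex.I)
      = (v.re : ℂ) - (v.im : ℂ) * Complex.I := by
    rw [map_add, map_mul, Complex.conj_ofReal, Complex.conj_ofReal, Complex.conj_I]
    ring
  rw [hc]
  simp only [wz, wzb, Complex.real_smul, mul_one]
  linear_combination ((v.im : ℂ) * (fderiv ℝ f z) Complex.I) * Complex.I_sq

lemma hasDerivAt_circ (r s : ℝ) :
    HasDerivAt (fun s : ℝ => (r:ℂ) * Complex.exp (Complex.I * s))
      (Complex.I * ((r:ℂ) * Complex.exp (Complex.I * s))) s := by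
  have h1 : HasDerivAt (fun s : ℝ => (s:ℂ)) 1 s := by
    simpa using (hasDerivAt_id s).ofReal_comp
  have h2 := ((h1.const_mul Complex.I).cexp).const_mul (r:ℂ)
  refine h2.congr_deriv ?_
  ring

lemma firstDeriv (f : ℂ → ℂ) {z : ℂ} (hf : DifferentiableAt ℝ f z) (r t : ℝ)
    (hz : z = (r:ℂ) * Complex.exp (Complex.I * t)) :
    HasDerivAt (fun s : ℝ => f ((r:ℂ) * Complex.exp (Complex.I * s)))
      (Complex.I * Lop f z) t := by
  subst hz
  have h := hf.hasFDerivAt.comp_hasDerivAt t (hasDerivAt_circ r t)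
  have hval := fderiv_apply_wz f ((r:ℂ) * Complex.exp (Complex.I * t))
      (Complex.I * ((r:ℂ) * Complex.exp (Complex.I * t)))
  rw [hval] at h
  refine h.congr_deriv ?_
  simp only [Lop, map_mul, Complex.conj_I]
  ring

lemma contDiffAt_fderiv_apply {f : ℂ → ℂ} {z : ℂ} (hf : ContDiffAt ℝ (⊤ : ℕ∞) f z) (v : ℂ) :
    ContDiffAt ℝ (⊤ : ℕ∞) (fun w => fderiv ℝ f w v) z :=
  (hf.fderiv_right (by simp)).clm_apply contDiffAt_const

lemma contDiffAt_wz {f : ℂ → ℂ} {z : ℂ} (hf : ContDiffAt ℝ (⊤ : ℕ∞) f z) :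
    ContDiffAt ℝ (⊤ : ℕ∞) (wz f) z := by
  unfold wz
  exact ((contDiffAt_fderiv_apply hf 1).sub
    (contDiffAt_const.mul (contDiffAt_fderiv_apply hf Complex.I))).div_const 2

lemma contDiffAt_wzb {f : ℂ → ℂ} {z : ℂ} (hf : ContDiffAt ℝ (⊤ : ℕ∞) f z) :
    ContDiffAt ℝ (⊤ : ℕ∞) (wzb f) z := by
  unfold wzb
  exact ((contDiffAt_fderiv_apply hf 1).add
    (contDiffAt_const.mul (contDiffAt_fderiv_apply hf Complex.I))).div_const 2

lemma mixed_symm {f : ℂ → ℂ} {z : ℂ} (hf : ContDiffAt ℝ (⊤ : ℕ∞) f z) :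
    wzb (wz f) z = wz (wzb f) z := by
  have hD : ContDiffAt ℝ (⊤ : ℕ∞) (fderiv ℝ f) z := hf.fderiv_right (by simp)
  have hDd : DifferentiableAt ℝ (fderiv ℝ f) z := hD.differentiableAt (by simp)
  have hsymm : IsSymmSndFDerivAt ℝ f z := hf.isSymmSndFDerivAt (by rw [minSmoothness_of_isRCLikeNormedField]; exact WithTop.coe_le_coe.mpr le_top)
  have ha : DifferentiableAt ℝ (fun w => fderiv ℝ f w (1:ℂ)) z :=
    hDd.clm_apply (differentiableAt_const _)
  have hb : DifferentiableAt ℝ (fun w => fderiv ℝ f w Complex.I) z :=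
    hDd.clm_apply (differentiableAt_const _)
  have hev : ∀ e e' : ℂ, fderiv ℝ (fun w => fderiv ℝ f w e) z e'
      = fderiv ℝ (fderiv ℝ f) z e' e := by
    intro e e'
    rw [fderiv_clm_apply hDd (differentiableAt_const e)]
    simp
  have hwz : ∀ e : ℂ, fderiv ℝ (wz f) z e
      = (fderiv ℝ (fderiv ℝ f) z e 1 - Complex.I * fderiv ℝ (fderiv ℝ f) z e Complex.I) / 2 := by
    intro e
    have h := ((ha.hasFDerivAt.fun_sub ((hb.hasFDerivAt).const_mul Complex.I)).const_mul (2:ℂ)⁻¹)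
    have h2 : wz f = fun w => (2:ℂ)⁻¹ * (fderiv ℝ f w 1 - Complex.I * fderiv ℝ f w Complex.I) := by
      funext w; unfold wz; rw [div_eq_inv_mul]
    rw [h2, h.fderiv]
    simp [← hev]; ring
  have hwzb : ∀ e : ℂ, fderiv ℝ (wzb f) z e
      = (fderiv ℝ (fderiv ℝ f) z e 1 + Complex.I * fderiv ℝ (fderiv ℝ f) z e Complex.I) / 2 := by
    intro e
    have h := ((ha.hasFDerivAt.fun_add ((hb.hasFDerivAt).const_mul Complex.I)).const_mul (2:ℂ)⁻¹)
    have h2 : wzb f = fun w => (2:ℂ)⁻¹ * (fderiv ℝ f w 1 + Complex.I * fderiv ℝ f w Complex.I) := by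
      funext w; unfold wzb; rw [div_eq_inv_mul]
    rw [h2, h.fderiv]
    simp [← hev]; ring
  show (fderiv ℝ (wz f) z 1 + Complex.I * fderiv ℝ (wz f) z Complex.I) / 2
      = (fderiv ℝ (wzb f) z 1 - Complex.I * fderiv ℝ (wzb f) z Complex.I) / 2
  rw [hwz 1, hwz Complex.I, hwzb 1, hwzb Complex.I]
  linear_combination (Complex.I / 2) * hsymm Complex.I 1

lemma secondDeriv (f : ℂ → ℂ) {z : ℂ} (hf : ContDiffAt ℝ (⊤ : ℕ∞) f z)
    (hh : wz (wzb f) z = 0) (r t : ℝ) (hz : z = (r:ℂ) * Complex.exp (Complex.I * t)) :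
    HasDerivAt (fun s : ℝ => Complex.I * Lop f ((r:ℂ) * Complex.exp (Complex.I * s)))
      (-(Lfrak f z + z ^ 2 * wz (wz f) z
        + ((starRingEnd ℂ) z) ^ 2 * wzb (wzb f) z)) t := by
  subst hz
  set z := (r:ℂ) * Complex.exp (Complex.I * t) with hz
  have hu : DifferentiableAt ℝ (wz f) z := (contDiffAt_wz hf).differentiableAt (by simp)
  have hv : DifferentiableAt ℝ (wzb f) z := (contDiffAt_wzb hf).differentiableAt (by simp)
  have hA : HasFDerivAt (fun w : ℂ => w * wz f w)
      (z • (fderiv ℝ (wz f) z) + (ContinuousLinearMap.id ℝ ℂ).smulRight (wz f z)) z :=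
    (hasFDerivAt_id z).mul' hu.hasFDerivAt
  have hconj : HasFDerivAt (fun w : ℂ => (starRingEnd ℂ) w)
      (Complex.conjCLE.toContinuousLinearMap) z := Complex.conjCLE.hasFDerivAt
  have hB : HasFDerivAt (fun w : ℂ => (starRingEnd ℂ) w * wzb f w)
      (((starRingEnd ℂ) z) • (fderiv ℝ (wzb f) z)
        + (Complex.conjCLE.toContinuousLinearMap).smulRight (wzb f z)) z :=
    hconj.mul' hv.hasFDerivAt
  have hφ := (hA.sub hB).const_mul Complex.I
  have h := hφ.comp_hasDerivAt t (show HasDerivAt (fun s : ℝ => (r:ℂ) * Complex.exp (Complex.I * s)) (Complex.I * z) t from hz ▸ hasDerivAt_circ r t)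
  have h' : HasDerivAt (fun s : ℝ => Complex.I * Lop f ((r:ℂ) * Complex.exp (Complex.I * s)))
      ((Complex.I • ((z • (fderiv ℝ (wz f) z) + (ContinuousLinearMap.id ℝ ℂ).smulRight (wz f z))
        - (((starRingEnd ℂ) z) • (fderiv ℝ (wzb f) z)
          + (Complex.conjCLE.toContinuousLinearMap).smulRight (wzb f z))))
        (Complex.I * z)) t := by
    exact h
  have hval : ((Complex.I • ((z • (fderiv ℝ (wz f) z) + (ContinuousLinearMap.id ℝ ℂ).smulRight (wz f z))
        - (((starRingEnd ℂ) z) • (fderiv ℝ (wzb f) z)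
          + (Complex.conjCLE.toContinuousLinearMap).smulRight (wzb f z))))
        (Complex.I * z))
      = -(Lfrak f z + z ^ 2 * wz (wz f) z + ((starRingEnd ℂ) z) ^ 2 * wzb (wzb f) z) := by
    simp only [ContinuousLinearMap.smul_apply, ContinuousLinearMap.sub_apply,
      ContinuousLinearMap.add_apply, ContinuousLinearMap.smulRight_apply,
      ContinuousLinearMap.id_apply, smul_eq_mul, ContinuousLinearEquiv.coe_coe,
      Complex.conjCLE_apply]
    rw [fderiv_apply_wz (wz f) z (Complex.I * z), fderiv_apply_wz (wzb f) z (Complex.I * z),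
      mixed_symm hf, hh]
    simp only [map_mul, Complex.conj_I, Lfrak]
    linear_combination ((z * wz f z + (starRingEnd ℂ) z * wzb f z + z ^ 2 * wz (wz f) z
      + ((starRingEnd ℂ) z) ^ 2 * wzb (wzb f) z)) * Complex.I_sq
  rw [hval] at h'
  exact h'


/-- For F(z) = Σ_{k=1}^p |z|^{2(k-1)} g_k(z) with each g_k harmonic
(indexed by k ∈ {0, …, p-1}), along z = re^{it}:
−∂²F/∂t² = Σ_k |z|^{2k}(𝔏[g_k] + z²(g_k)_{zz} + z̄²(g_k)_{z̄z̄}). -/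
theorem stmt12 (p : ℕ) (g : ℕ → ℂ → ℂ)
    (hg : ∀ k, ContDiffOn ℝ (⊤ : ℕ∞) (g k) (Metric.ball (0 : ℂ) 1))
    (hharm : ∀ k, ∀ z ∈ Metric.ball (0 : ℂ) 1, wz (wzb (g k)) z = 0)
    (r t : ℝ) (hr0 : 0 < r) (hr1 : r < 1) :
    -(deriv (deriv (fun s : ℝ =>
        ∑ k ∈ Finset.range p,
          ((‖(r : ℂ) * Complex.exp (Complex.I * s)‖ : ℝ) : ℂ) ^ (2 * k)
            * g k ((r : ℂ) * Complex.exp (Complex.I * s)))) t)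
      = ∑ k ∈ Finset.range p,
          ((‖(r : ℂ) * Complex.exp (Complex.I * t)‖ : ℝ) : ℂ) ^ (2 * k) *
            (Lfrak (g k) ((r : ℂ) * Complex.exp (Complex.I * t))
              + ((r : ℂ) * Complex.exp (Complex.I * t)) ^ 2
                  * wz (wz (g k)) ((r : ℂ) * Complex.exp (Complex.I * t))
              + ((starRingEnd ℂ) ((r : ℂ) * Complex.exp (Complex.I * t))) ^ 2
                  * wzb (wzb (g k)) ((r : ℂ) * Complex.exp (Complex.I * t))) := by
  have habs : ∀ s : ℝ, ‖(r : ℂ) * Complex.exp (Complex.I * s)‖ = r := by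
    intro s
    rw [norm_mul, Complex.norm_real, Complex.norm_exp]
    simp [abs_of_pos hr0, Complex.mul_re]
  have hmem : ∀ s : ℝ, ((r : ℂ) * Complex.exp (Complex.I * s)) ∈ Metric.ball (0 : ℂ) 1 := by
    intro s
    rw [mem_ball_zero_iff, habs s]
    exact hr1
  have hcd : ∀ k (s : ℝ), ContDiffAt ℝ (⊤ : ℕ∞) (g k) ((r : ℂ) * Complex.exp (Complex.I * s)) :=
    fun k s => (hg k).contDiffAt (Metric.isOpen_ball.mem_nhds (hmem s))
  have hF : (fun s : ℝ =>
        ∑ k ∈ Finset.range p,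
          ((‖(r : ℂ) * Complex.exp (Complex.I * s)‖ : ℝ) : ℂ) ^ (2 * k)
            * g k ((r : ℂ) * Complex.exp (Complex.I * s)))
      = fun s : ℝ => ∑ k ∈ Finset.range p,
          ((r : ℂ)) ^ (2 * k) * g k ((r : ℂ) * Complex.exp (Complex.I * s)) := by
    funext s
    refine Finset.sum_congr rfl fun k _ => ?_
    rw [habs s]
  rw [hF]
  have hd1 : deriv (fun s : ℝ => ∑ k ∈ Finset.range p,
        ((r : ℂ)) ^ (2 * k) * g k ((r : ℂ) * Complex.exp (Complex.I * s)))
      = fun s : ℝ => ∑ k ∈ Finset.range p,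
        ((r : ℂ)) ^ (2 * k) * (Complex.I * Lop (g k) ((r : ℂ) * Complex.exp (Complex.I * s))) := by
    funext s
    exact (HasDerivAt.fun_sum fun k _ =>
      (firstDeriv (g k) ((hcd k s).differentiableAt (by simp)) r s rfl).const_mul
        (((r : ℂ)) ^ (2 * k))).deriv
  rw [hd1]
  have hd2 := (HasDerivAt.fun_sum (u := Finset.range p) fun k _ =>
      (secondDeriv (g k) (hcd k t) (hharm k _ (hmem t)) r t rfl).const_mul
        (((r : ℂ)) ^ (2 * k))).deriv
  rw [hd2, ← Finset.sum_neg_distrib]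
  refine Finset.sum_congr rfl fun k _ => ?_
  rw [habs t]
  ring
end
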